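/- arXiv:2301.02644 — 3 statements merged into one kernel-verified Lean document; each statement's English description precedes it below -/
import Mathlib

section
/- Let k be a commutative ring, d ≥ 0, n ≥ 0. Let F : k[a_1,…,a_{d+1}, b_1,…,b_{d+1}, γ_1,…,γ_n] → k[a_1,…,a_d, b_1,…,b_d, c, γ_1,…,γ_n] be the k-algebra homomorphism with F(a_i) = a_{i−1} − c·a_i and F(b_i) = b_{i−1} − c·b_i for 1 ≤ i ≤ d+1 (conventions a_0 = b_0 = b_{d+1} = 0 and a_{d+1} = 1 in the target, so F(a_1) = −c·a_1, F(a_{d+1}) = a_d − c, F(b_1) = −c·b_1, F(b_{d+1}) = b_d) and F(γ_j) = γ_j. Then F(W_{d+1,n}) = W_{d,n} (the latter viewed in the target ring). -/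
/-! Write `B_d = b_d + b_{d-1} z + ⋯ + b_1 z^{d-1}` and `P_d = 1 + a_d z + ⋯ + a_1 z^d`, so that
`W_{d,n} = ∑_{i ≤ n} γ_{i+1} [z^i] (B_d / P_d)`. Under `F` numerator and denominator pick up the
same factor: `F(P_{d+1}) = (1 - c z) P_d` and `F(B_{d+1}) = (1 - c z) B_d`, the conventions
`a_0 = b_0 = 0`, `a_{d+1} = 1`, `b_{d+1} = 0` killing the boundary terms. Hence `F` fixes `B / P`
coefficientwise, and `F(W_{d+1,n}) = W_{d,n}`. -/

open MvPolynomial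

/-- The power series `1 + a_d z + a_{d-1} z^2 + ⋯ + a_1 z^d`, where the variable
`X m : MvPolynomial (Fin d) k` represents `a_{m+1}`. -/
noncomputable def Pser (k : Type) [CommRing k] (d : ℕ) :
    PowerSeries (MvPolynomial (Fin d) k) :=
  1 + ∑ m : Fin d, PowerSeries.monomial (d - (m : ℕ)) (X m)

/-- `vcoef k d i` is `v_{i,d}`, the `i`-th coefficient of the inverse of the
power series `1 + a_d z + ⋯ + a_1 z^d`. -/
noncomputable def vcoef (k : Type) [CommRing k] (d : ℕ) (i : ℕ) :
    MvPolynomial (Fin d) k :=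
  PowerSeries.coeff i ((Pser k d).invOfUnit 1)

/-- The type of variables `a_1, …, a_d, b_1, …, b_d, γ_1, …, γ_n`:
`Sum.inl (Sum.inl p)` is `a_{p+1}`, `Sum.inl (Sum.inr p)` is `b_{p+1}`,
`Sum.inr q` is `γ_{q+1}`. -/
abbrev WVar (d n : ℕ) : Type := (Fin d ⊕ Fin d) ⊕ Fin n

/-- `v_{i,d}` viewed in `k[a,b,γ]`. -/
noncomputable def va (k : Type) [CommRing k] (d n : ℕ) (i : ℕ) :
    MvPolynomial (WVar d n) k :=
  rename (fun m => Sum.inl (Sum.inl m)) (vcoef k d i)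

/-- `γ_{i+1}`, with the convention `γ_{n+1} = 1`. -/
noncomputable def gamW (k : Type) [CommRing k] (d n : ℕ) (i : ℕ) :
    MvPolynomial (WVar d n) k :=
  if h : i < n then X (Sum.inr (⟨i, h⟩ : Fin n)) else 1

/-- `W_{d,n} = ∑_{i=0}^n γ_{i+1} (b_d v_{i,d} + b_{d-1} v_{i-1,d} + ⋯ + b_1 v_{i-d+1,d})`,
where terms `v_{i,d}` with `i < 0` are omitted (they are zero). -/
noncomputable def Wpoly (k : Type) [CommRing k] (d n : ℕ) :
    MvPolynomial (WVar d n) k :=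
  ∑ i ∈ Finset.range (n + 1), gamW k d n i *
    ∑ j : Fin d,
      if d - 1 - (j : ℕ) ≤ i then
        X (Sum.inl (Sum.inr j)) * va k d n (i - (d - 1 - (j : ℕ)))
      else 0

/-- Variables of the target ring `k[a_1,…,a_d, b_1,…,b_d, c, γ_1,…,γ_n]`:
`Sum.inl (Sum.inl (Sum.inl p))` is `a_{p+1}`, `Sum.inl (Sum.inl (Sum.inr p))` is `b_{p+1}`,
`Sum.inl (Sum.inr ())` is `c`, and `Sum.inr q` is `γ_{q+1}`. -/
abbrev CVar (d n : ℕ) : Type := ((Fin d ⊕ Fin d) ⊕ Unit) ⊕ Fin n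

/-- `a_m` in the target ring, with the conventions `a_0 = 0` and `a_{d+1} = 1`. -/
noncomputable def aT (k : Type) [CommRing k] (d n : ℕ) (m : ℕ) :
    MvPolynomial (CVar d n) k :=
  if h : 1 ≤ m ∧ m ≤ d then X (Sum.inl (Sum.inl (Sum.inl (⟨m - 1, by omega⟩ : Fin d))))
  else if m = d + 1 then 1 else 0

/-- `b_m` in the target ring, with the conventions `b_0 = 0` and `b_{d+1} = 0`. -/
noncomputable def bT (k : Type) [CommRing k] (d n : ℕ) (m : ℕ) :
    MvPolynomial (CVar d n) k :=
  if h : 1 ≤ m ∧ m ≤ d then X (Sum.inl (Sum.inl (Sum.inr (⟨m - 1, by omega⟩ : Fin d))))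
  else 0

/-- The algebra map `F : k[a_1,…,a_{d+1},b_1,…,b_{d+1},γ_1,…,γ_n] → k[a,b,c,γ]`,
`a_i ↦ a_{i-1} - c·a_i`, `b_i ↦ b_{i-1} - c·b_i` (with `a_0 = b_0 = b_{d+1} = 0`,
`a_{d+1} = 1`), `γ_j ↦ γ_j`. -/
noncomputable def Fmap (k : Type) [CommRing k] (d n : ℕ) :
    MvPolynomial (WVar (d + 1) n) k →ₐ[k] MvPolynomial (CVar d n) k :=
  aeval (fun v => match v with
    | Sum.inl (Sum.inl p) =>
        aT k d n p - X (Sum.inl (Sum.inr ())) * aT k d n ((p : ℕ) + 1)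
    | Sum.inl (Sum.inr p) =>
        bT k d n p - X (Sum.inl (Sum.inr ())) * bT k d n ((p : ℕ) + 1)
    | Sum.inr q => X (Sum.inr q))

/-- The inclusion of `k[a_1,…,a_d,b_1,…,b_d,γ_1,…,γ_n]` into
`k[a_1,…,a_d,b_1,…,b_d,c,γ_1,…,γ_n]`. -/
def embW (d n : ℕ) : WVar d n → CVar d n
  | Sum.inl x => Sum.inl (Sum.inl x)
  | Sum.inr q => Sum.inr q

noncomputable def revSeries {R : Type*} [CommRing R] (s : ℕ → R) (N : ℕ) : PowerSeries R :=
  ∑ p ∈ Finset.range N, PowerSeries.C (s p) * PowerSeries.X ^ (N - 1 - p)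

theorem revSeries_sub_mul_succ {R : Type*} [CommRing R] (s : ℕ → R) (c : R) (N : ℕ)
    (h0 : s 0 = 0) (hN : s (N + 1) = 0) :
    revSeries (fun p => s p - c * s (p + 1)) (N + 1) =
      (1 - PowerSeries.C c * PowerSeries.X) * revSeries (fun p => s (p + 1)) N := by
  simp only [revSeries, map_sub, map_mul, sub_mul, Finset.sum_sub_distrib, one_mul,
    Finset.mul_sum]
  rw [Finset.sum_range_succ' _ N, Finset.sum_range_succ _ N, h0, hN]
  simp only [map_zero, zero_mul, mul_zero, add_zero, add_tsub_cancel_right]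
  congr 1
  · refine Finset.sum_congr rfl fun p _ => ?_
    rw [show N - (p + 1) = N - 1 - p by omega]
  · refine Finset.sum_congr rfl fun p hp => ?_
    rw [Finset.mem_range] at hp
    rw [show N - p = N - 1 - p + 1 by omega, pow_succ]
    ring

theorem mul_eq_mul_of_common_factor {R : Type*} [CommRing R] {u b b' p p' v v' : R}
    (hb : b' = u * b) (hp : p' = u * p) (hpv' : p' * v' = 1) (hpv : p * v = 1) :
    b' * v' = b * v := by
  subst hb hp
  linear_combination (b * v) * hpv' - (b * u * v') * hpv

section

variable (k : Type) [CommRing k] (d n : ℕ)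

noncomputable def bSeries : PowerSeries (MvPolynomial (WVar d n) k) :=
  ∑ j : Fin d, PowerSeries.C (X (Sum.inl (Sum.inr j))) * PowerSeries.X ^ (d - 1 - (j : ℕ))

noncomputable def pSeries : PowerSeries (MvPolynomial (WVar d n) k) :=
  PowerSeries.map
    (rename fun m : Fin d => (Sum.inl (Sum.inl m) : WVar d n) : MvPolynomial (Fin d) k →ₐ[k] _)
    (Pser k d)

noncomputable def vSeries : PowerSeries (MvPolynomial (WVar d n) k) :=
  PowerSeries.map
    (rename fun m : Fin d => (Sum.inl (Sum.inl m) : WVar d n) : MvPolynomial (Fin d) k →ₐ[k] _)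
    ((Pser k d).invOfUnit 1)

theorem pSeries_mul_vSeries : pSeries k d n * vSeries k d n = 1 := by
  have hP : PowerSeries.constantCoeff (Pser k d) = ((1 : (MvPolynomial (Fin d) k)ˣ) : _) := by
    simp only [Pser, map_add, map_one, map_sum, add_eq_left, Units.val_one]
    refine Finset.sum_eq_zero fun m _ => ?_
    rw [← PowerSeries.coeff_zero_eq_constantCoeff_apply, PowerSeries.coeff_monomial,
      if_neg (by omega)]
  rw [pSeries, vSeries, ← map_mul, PowerSeries.mul_invOfUnit _ _ hP, map_one]

theorem Wpoly_eq_sum_coeff :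
    Wpoly k d n = ∑ i ∈ Finset.range (n + 1),
      gamW k d n i * PowerSeries.coeff i (bSeries k d n * vSeries k d n) := by
  refine Finset.sum_congr rfl fun i _ => ?_
  rw [bSeries, Finset.sum_mul, map_sum]
  congr 1
  refine Finset.sum_congr rfl fun j _ => ?_
  rw [mul_assoc, PowerSeries.coeff_C_mul, PowerSeries.coeff_X_pow_mul']
  split_ifs
  · rw [vSeries, PowerSeries.coeff_map, va, vcoef]; rfl
  · rw [mul_zero]

noncomputable def cT : MvPolynomial (CVar d n) k := X (Sum.inl (Sum.inr ()))

theorem aT_zero : aT k d n 0 = 0 := by simp [aT]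

theorem aT_succ (m : Fin d) : aT k d n (m + 1) = X (Sum.inl (Sum.inl (Sum.inl m))) := by
  simp [aT]

theorem aT_last : aT k d n (d + 1) = 1 := by simp [aT]

theorem aT_last_succ : aT k d n (d + 2) = 0 := by simp [aT]

theorem bT_zero : bT k d n 0 = 0 := by simp [bT]

theorem bT_succ (m : Fin d) : bT k d n (m + 1) = X (Sum.inl (Sum.inl (Sum.inr m))) := by
  simp [bT]

theorem bT_last : bT k d n (d + 1) = 0 := by simp [bT]

theorem map_Fmap_bSeries_eq_revSeries :
    PowerSeries.map (Fmap k d n) (bSeries k (d + 1) n) =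
      revSeries (fun p => bT k d n p - cT k d n * bT k d n (p + 1)) (d + 1) := by
  simp [bSeries, revSeries, Finset.sum_range, Fmap, cT]

theorem map_rename_bSeries_eq_revSeries :
    PowerSeries.map (rename (R := k) (embW d n) : _ →+* MvPolynomial (CVar d n) k)
      (bSeries k d n) = revSeries (fun p => bT k d n (p + 1)) d := by
  simp [bSeries, revSeries, Finset.sum_range, bT_succ, embW]

theorem map_Fmap_pSeries_eq_revSeries :
    PowerSeries.map (Fmap k d n) (pSeries k (d + 1) n) =
      revSeries (fun p => aT k d n p - cT k d n * aT k d n (p + 1)) (d + 2) := by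
  rw [revSeries, Finset.sum_range_succ, aT_last, aT_last_succ]
  simp [pSeries, Pser, Finset.sum_range, Fmap, cT, PowerSeries.monomial_eq_C_mul_X_pow, add_comm]

theorem map_rename_pSeries_eq_revSeries :
    PowerSeries.map (rename (R := k) (embW d n) : _ →+* MvPolynomial (CVar d n) k)
      (pSeries k d n) = revSeries (fun p => aT k d n (p + 1)) (d + 1) := by
  rw [revSeries, Finset.sum_range_succ, aT_last]
  simp [pSeries, Pser, Finset.sum_range, aT_succ, embW, PowerSeries.monomial_eq_C_mul_X_pow,
    add_comm]

theorem map_Fmap_bSeries :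
    PowerSeries.map (Fmap k d n) (bSeries k (d + 1) n) =
      (1 - PowerSeries.C (cT k d n) * PowerSeries.X) *
        PowerSeries.map (rename (R := k) (embW d n) : _ →+* MvPolynomial (CVar d n) k)
          (bSeries k d n) := by
  rw [map_Fmap_bSeries_eq_revSeries, map_rename_bSeries_eq_revSeries]
  exact revSeries_sub_mul_succ _ _ _ (bT_zero k d n) (bT_last k d n)

theorem map_Fmap_pSeries :
    PowerSeries.map (Fmap k d n) (pSeries k (d + 1) n) =
      (1 - PowerSeries.C (cT k d n) * PowerSeries.X) *
        PowerSeries.map (rename (R := k) (embW d n) : _ →+* MvPolynomial (CVar d n) k)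
          (pSeries k d n) := by
  rw [map_Fmap_pSeries_eq_revSeries, map_rename_pSeries_eq_revSeries]
  exact revSeries_sub_mul_succ _ _ _ (aT_zero k d n) (aT_last_succ k d n)

theorem map_Fmap_bSeries_mul_vSeries :
    PowerSeries.map (Fmap k d n) (bSeries k (d + 1) n * vSeries k (d + 1) n) =
      PowerSeries.map (rename (R := k) (embW d n) : _ →+* MvPolynomial (CVar d n) k)
        (bSeries k d n * vSeries k d n) := by
  rw [map_mul, map_mul]
  refine mul_eq_mul_of_common_factor (map_Fmap_bSeries k d n) (map_Fmap_pSeries k d n) ?_ ?_ <;>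
    rw [← map_mul, pSeries_mul_vSeries, map_one]

theorem Fmap_gamW (i : ℕ) :
    Fmap k d n (gamW k (d + 1) n i) = rename (embW d n) (gamW k d n i) := by
  unfold gamW
  split_ifs <;> simp [Fmap, embW]

end

/-- `F(W_{d+1,n}) = W_{d,n}`, the latter viewed in the target ring. -/
theorem statement0 (k : Type) [CommRing k] (d n : ℕ) :
    Fmap k d n (Wpoly k (d + 1) n) = rename (embW d n) (Wpoly k d n) := by
  rw [Wpoly_eq_sum_coeff, Wpoly_eq_sum_coeff, map_sum, map_sum]
  refine Finset.sum_congr rfl fun i _ => ?_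
  have hcoeff := congrArg (PowerSeries.coeff i) (map_Fmap_bSeries_mul_vSeries k d n)
  rw [PowerSeries.coeff_map, PowerSeries.coeff_map] at hcoeff
  rw [map_mul (Fmap k d n), map_mul (rename (embW d n)), Fmap_gamW]
  exact congrArg _ hcoeff
end

section
/- Let k be a commutative ring and d > n ≥ 0. Then W_{d,n} = b_d·(γ_1 + Σ_{i=1}^n γ_{i+1} v_{i,d}) + b_{d−1}·(γ_2 + Σ_{i=2}^n γ_{i+1} v_{i−1,d}) + ⋯ + b_{d−n+1}·(γ_n + v_{1,d}) + b_{d−n}; that is, W_{d,n} = b_{d−n} + Σ_{r=1}^{n} b_{d−r+1}·(γ_r + Σ_{i=r}^n γ_{i+1} v_{i−r+1,d}). In particular the variable b_{d−n} occurs in W_{d,n} with coefficient exactly 1. -/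
open MvPolynomial

/-!
Substituting `r = d - 1 - j` turns `W_{d,n}` into the double sum
`∑_{i ≤ n} γ_{i+1} ∑_{r ≤ i} b_{d-r} v_{i-r,d}`. Exchanging the order of summation
collects the coefficient `∑_{r ≤ i ≤ n} γ_{i+1} v_{i-r,d}` of `b_{d-r}`; since
`v_{0,d} = 1` its term `i = r` is `γ_{r+1}`, and for `r = n` the whole coefficient
is `γ_{n+1} v_{0,d} = 1`.
-/

open Finset

section Convolution

variable {R : Type*} [CommSemiring R]

theorem sum_mul_sum_range_succ_comm (g b v : ℕ → R) (n : ℕ) :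
    ∑ i ∈ range (n + 1), g i * ∑ r ∈ range (i + 1), b r * v (i - r) =
      ∑ r ∈ range (n + 1), b r * ∑ i ∈ Icc r n, g i * v (i - r) := by
  calc ∑ i ∈ range (n + 1), g i * ∑ r ∈ range (i + 1), b r * v (i - r)
      = ∑ i ∈ Ico 0 (n + 1), ∑ r ∈ Ico 0 (i + 1), b r * (g i * v (i - r)) := by
        simp only [range_eq_Ico, mul_sum, mul_left_comm]
    _ = ∑ r ∈ Ico 0 (n + 1), ∑ i ∈ Ico r (n + 1), b r * (g i * v (i - r)) :=
        (sum_Ico_Ico_comm 0 (n + 1) fun r i => b r * (g i * v (i - r))).symm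
    _ = ∑ r ∈ range (n + 1), b r * ∑ i ∈ Icc r n, g i * v (i - r) := by
        simp only [range_eq_Ico, Ico_add_one_right_eq_Icc, mul_sum]

theorem sum_mul_sum_range_succ_eq_add_sum (g b v : ℕ → R) (n : ℕ) (hg : g n = 1)
    (hv : v 0 = 1) :
    ∑ i ∈ range (n + 1), g i * ∑ r ∈ range (i + 1), b r * v (i - r) =
      b n + ∑ r ∈ range n, b r * (g r + ∑ i ∈ Icc (r + 1) n, g i * v (i - r)) := by
  rw [sum_mul_sum_range_succ_comm, sum_range_succ, add_comm, Icc_self, sum_singleton,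
    Nat.sub_self, hg, hv, one_mul, mul_one]
  congr 1
  refine sum_congr rfl fun r hr => ?_
  rw [← insert_Icc_add_one_left_eq_Icc (mem_range.mp hr).le, sum_insert (by simp),
    Nat.sub_self, hv, mul_one]

end Convolution

theorem sum_fin_ite_sub_le_eq_sum_range {M : Type*} [AddCommMonoid M] (φ : ℕ → M)
    {d i : ℕ} (hid : i < d) :
    ∑ j : Fin d, (if d - 1 - j ≤ i then φ (d - 1 - j) else 0) =
      ∑ r ∈ range (i + 1), φ r := by
  rw [← Equiv.sum_comp Fin.revPerm]
  have hrev (j : Fin d) : d - 1 - (Fin.revPerm j : ℕ) = j := by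
    simp only [Fin.revPerm_apply, Fin.val_rev]; omega
  simp only [hrev]
  rw [Fin.sum_univ_eq_sum_range (fun r => if r ≤ i then φ r else 0), ← sum_filter]
  congr 1
  ext r
  simp only [mem_filter, mem_range]
  omega

theorem vcoef_zero (k : Type) [CommRing k] (d : ℕ) : vcoef k d 0 = 1 := by
  rw [vcoef, PowerSeries.coeff_zero_eq_constantCoeff, PowerSeries.constantCoeff_invOfUnit,
    inv_one, Units.val_one]

theorem va_zero (k : Type) [CommRing k] (d n : ℕ) : va k d n 0 = 1 := by
  rw [va, vcoef_zero, map_one]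

theorem gamW_self (k : Type) [CommRing k] (d n : ℕ) : gamW k d n n = 1 :=
  dif_neg (lt_irrefl n)

/-- `b_{d-r}`, extended by `0` for `r ≥ d`. -/
noncomputable def bVar (k : Type) [CommRing k] (d n r : ℕ) : MvPolynomial (WVar d n) k :=
  if h : r < d then X (Sum.inl (Sum.inr (Fin.rev ⟨r, h⟩))) else 0

theorem bVar_eq_X_of_val_eq (k : Type) [CommRing k] {d r : ℕ} (n : ℕ) (j : Fin d)
    (hj : r + j + 1 = d) : bVar k d n r = X (Sum.inl (Sum.inr j)) := by
  rw [bVar, dif_pos (by omega)]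
  congr
  ext
  simp only [Fin.val_rev]
  omega

theorem Wpoly_eq_sum_range (k : Type) [CommRing k] {d n : ℕ} (hdn : n < d) :
    Wpoly k d n = ∑ i ∈ range (n + 1),
      gamW k d n i * ∑ r ∈ range (i + 1), bVar k d n r * va k d n (i - r) := by
  refine sum_congr rfl fun i hi => ?_
  have hid : i < d := (mem_range_succ_iff.mp hi).trans_lt hdn
  rw [← sum_fin_ite_sub_le_eq_sum_range _ hid]
  congr 1
  refine sum_congr rfl fun j _ => ?_
  rw [bVar_eq_X_of_val_eq k n j (by omega)]

/-- for `d > n ≥ 0`,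
`W_{d,n} = b_{d-n} + ∑_{r=1}^{n} b_{d-r+1}·(γ_r + ∑_{i=r}^n γ_{i+1} v_{i-r+1,d})`
(the sum below is indexed by `r' = r - 1 ∈ {0,…,n-1}`). -/
theorem statement1 (k : Type) [CommRing k] (d n : ℕ) (hdn : n < d) :
    Wpoly k d n =
      X (Sum.inl (Sum.inr (⟨d - n - 1, by omega⟩ : Fin d))) +
      ∑ r ∈ Finset.range n,
        X (Sum.inl (Sum.inr (⟨d - r - 1, by omega⟩ : Fin d))) *
          (gamW k d n r +
            ∑ i ∈ Finset.Icc (r + 1) n, gamW k d n i * va k d n (i - r)) := by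
  rw [Wpoly_eq_sum_range k hdn,
    sum_mul_sum_range_succ_eq_add_sum _ _ _ n (gamW_self k d n) (va_zero k d n),
    bVar_eq_X_of_val_eq k n ⟨d - n - 1, by omega⟩ (by dsimp only; omega)]
  congr 1
  refine sum_congr rfl fun r hr => ?_
  have hrn : r < n := mem_range.mp hr
  rw [bVar_eq_X_of_val_eq k n ⟨d - r - 1, by omega⟩ (by dsimp only; omega)]
end

section
/- Let k be a commutative ring, d ≥ 0, n ≥ 0. Endow the polynomial ring k[a_1,…,a_d, b_1,…,b_d, γ_1,…,γ_n] with the ℤ×ℤ-weighted grading given by wt(a_i) = (2(d−i+1), 0), wt(b_i) = (2(d−i+1), −2), wt(γ_i) = (2(n+1−i), 0). Then each v_{i,d} is weighted homogeneous of weight (2i, 0), and W_{d,n} is weighted homogeneous of weight (2(n+1), −2). -/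
open MvPolynomial

/-- The weights on `k[a_1,…,a_d]`: `wt(a_m) = (2(d-m+1), 0)`, i.e. the variable of
index `p` (representing `a_{p+1}`) has weight `(2(d-p), 0)`. -/
def wtA (d : ℕ) : Fin d → ℤ × ℤ := fun p => (2 * ((d : ℤ) - (p : ℕ)), 0)

/-- The weights on `k[a_1,…,a_d,b_1,…,b_d,γ_1,…,γ_n]`: `wt(a_m) = (2(d-m+1), 0)`,
`wt(b_m) = (2(d-m+1), -2)`, `wt(γ_m) = (2(n+1-m), 0)`. -/
def wtW (d n : ℕ) : WVar d n → ℤ × ℤ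
  | Sum.inl (Sum.inl p) => (2 * ((d : ℤ) - (p : ℕ)), 0)
  | Sum.inl (Sum.inr p) => (2 * ((d : ℤ) - (p : ℕ)), -2)
  | Sum.inr q => (2 * ((n : ℤ) - (q : ℕ)), 0)

/-! Give the formal variable `z` weight `(2, 0)`. Then the `j`-th coefficient of
`1 + a_d z + ⋯ + a_1 z^d` has weight `j • (2, 0)`, and the recursion
`v_i = -∑_{0 < j ≤ i} c_j v_{i-j}` (with `c_j` that coefficient) propagates this to every
`v_{i,d}`. In `W_{d,n}` the summand `γ_{i+1} b_{j+1} v_{i-d+1+j,d}` then has weight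
`(2(n-i), 0) + (2(d-j), -2) + (2(i-d+1+j), 0) = (2(n+1), -2)`. -/

namespace MvPolynomial

variable {σ τ R M : Type*} [CommRing R] [AddCommMonoid M] {w : τ → M}

theorem IsWeightedHomogeneous.rename {φ : MvPolynomial σ R} {m : M} (g : σ → τ)
    (h : IsWeightedHomogeneous (w ∘ g) φ m) : IsWeightedHomogeneous w (rename g φ) m := by
  rw [← φ.support_sum_monomial_coeff, map_sum]
  simp_rw [rename_monomial]
  refine IsWeightedHomogeneous.sum _ _ _ fun c hc ↦ isWeightedHomogeneous_monomial _ _ _ ?_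
  rw [← h (mem_support_iff.mp hc), Finsupp.weight_apply, Finsupp.weight_apply,
    Finsupp.sum_mapDomain_index (by simp) fun _ _ _ ↦ add_smul _ _ _]
  rfl

end MvPolynomial

namespace PowerSeries

open MvPolynomial

variable {σ R M : Type*} [CommRing R] [AddCommMonoid M] {w : σ → M} {e : M}

theorem isWeightedHomogeneous_coeff_monomial {φ : MvPolynomial σ R} {i : ℕ}
    (hφ : IsWeightedHomogeneous w φ (i • e)) (j : ℕ) :
    IsWeightedHomogeneous w (coeff j (monomial i φ)) (j • e) := by
  rw [coeff_monomial]
  split_ifs with hji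
  · rwa [hji]
  · exact isWeightedHomogeneous_zero R w _

theorem isWeightedHomogeneous_coeff_one (j : ℕ) :
    IsWeightedHomogeneous w (coeff j (1 : PowerSeries (MvPolynomial σ R))) (j • e) := by
  rw [coeff_one]
  split_ifs with hj
  · simpa [hj] using isWeightedHomogeneous_one R w
  · exact isWeightedHomogeneous_zero R w _

theorem isWeightedHomogeneous_coeff_invOfUnit {f : PowerSeries (MvPolynomial σ R)}
    (hf : ∀ j, IsWeightedHomogeneous w (coeff j f) (j • e)) {u : (MvPolynomial σ R)ˣ}
    (hu : IsWeightedHomogeneous w (↑u⁻¹ : MvPolynomial σ R) 0) (i : ℕ) :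
    IsWeightedHomogeneous w (coeff i (f.invOfUnit u)) (i • e) := by
  induction i using Nat.strong_induction_on with
  | _ i ih =>
    rw [coeff_invOfUnit]
    split_ifs with hi
    · rwa [hi, zero_smul]
    rw [← zero_add (i • e)]
    refine hu.neg.mul (IsWeightedHomogeneous.sum _ _ _ fun x hx ↦ ?_)
    split_ifs with hx₂
    · rw [← Finset.HasAntidiagonal.mem_antidiagonal.mp hx, add_smul]
      exact (hf x.1).mul (ih x.2 hx₂)
    · exact isWeightedHomogeneous_zero R w _

end PowerSeries

open PowerSeries

theorem isWeightedHomogeneous_coeff_Pser (k : Type) [CommRing k] (d j : ℕ) :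
    IsWeightedHomogeneous (wtA d) (coeff j (Pser k d)) (j • ((2 : ℤ), (0 : ℤ))) := by
  rw [Pser, map_add, map_sum]
  refine (isWeightedHomogeneous_coeff_one j).add
    (IsWeightedHomogeneous.sum _ _ _ fun m _ ↦ isWeightedHomogeneous_coeff_monomial ?_ j)
  convert isWeightedHomogeneous_X k (wtA d) m using 1
  have := m.isLt
  exact Prod.ext (by simp [wtA]; omega) rfl

theorem isWeightedHomogeneous_vcoef (k : Type) [CommRing k] (d i : ℕ) :
    IsWeightedHomogeneous (wtA d) (vcoef k d i) (2 * (i : ℤ), 0) := by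
  rw [vcoef]
  convert isWeightedHomogeneous_coeff_invOfUnit (isWeightedHomogeneous_coeff_Pser k d)
    (u := 1) (by simpa using isWeightedHomogeneous_one k (wtA d)) i using 1
  rw [Prod.smul_mk, smul_zero, nsmul_eq_mul, mul_comm]

theorem isWeightedHomogeneous_va (k : Type) [CommRing k] (d n i : ℕ) :
    IsWeightedHomogeneous (wtW d n) (va k d n i) (2 * (i : ℤ), 0) :=
  IsWeightedHomogeneous.rename (w := wtW d n) _ (isWeightedHomogeneous_vcoef k d i)

theorem isWeightedHomogeneous_gamW (k : Type) [CommRing k] (d n : ℕ) {i : ℕ} (hi : i ≤ n) :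
    IsWeightedHomogeneous (wtW d n) (gamW k d n i) (2 * ((n : ℤ) - i), 0) := by
  rw [gamW]
  split_ifs with h
  · convert isWeightedHomogeneous_X k (wtW d n) (Sum.inr (⟨i, h⟩ : Fin n)) using 1
    rfl
  · convert isWeightedHomogeneous_one k (wtW d n) using 1
    exact Prod.ext (by simp; omega) rfl

theorem isWeightedHomogeneous_X_mul_va (k : Type) [CommRing k] (d n i : ℕ) (j : Fin d)
    (hj : d - 1 - (j : ℕ) ≤ i) :
    IsWeightedHomogeneous (wtW d n) (X (Sum.inl (Sum.inr j)) * va k d n (i - (d - 1 - (j : ℕ))))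
      (2 * ((i : ℤ) + 1), -2) := by
  convert (isWeightedHomogeneous_X k (wtW d n) (Sum.inl (Sum.inr j))).mul
    (isWeightedHomogeneous_va k d n (i - (d - 1 - (j : ℕ)))) using 1
  have := j.isLt
  exact Prod.ext (by simp [wtW]; omega) (by simp [wtW])

/-- each `v_{i,d}` is weighted homogeneous of weight `(2i, 0)`, and
`W_{d,n}` is weighted homogeneous of weight `(2(n+1), -2)`. -/
theorem statement3 (k : Type) [CommRing k] (d n : ℕ) :
    (∀ i : ℕ, IsWeightedHomogeneous (wtA d) (vcoef k d i) (2 * (i : ℤ), 0)) ∧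
    IsWeightedHomogeneous (wtW d n) (Wpoly k d n) (2 * ((n : ℤ) + 1), -2) := by
  refine ⟨isWeightedHomogeneous_vcoef k d, IsWeightedHomogeneous.sum _ _ _ fun i hi ↦ ?_⟩
  have hin : i ≤ n := Nat.lt_succ_iff.mp (Finset.mem_range.mp hi)
  rw [show (2 * ((n : ℤ) + 1), (-2 : ℤ)) = (2 * ((n : ℤ) - i), 0) + (2 * ((i : ℤ) + 1), -2) from
    Prod.ext (by simp; ring) (by simp)]
  refine (isWeightedHomogeneous_gamW k d n hin).mul (IsWeightedHomogeneous.sum _ _ _ fun j _ ↦ ?_)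
  split_ifs with hj
  · exact isWeightedHomogeneous_X_mul_va k d n i j hj
  · exact isWeightedHomogeneous_zero k _ _
end
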